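/- Let n ≥ 3 and α, β > 0. The event {S_{n,α,β}(n−1) = β}, i.e. that the box (n−1,1) of S_{n,α,β} contains a β, has positive probability, and conditionally on this event the tableau (S_{n,α,β})_{n−1,2} of size n−1 obtained from S_{n,α,β} by deleting its (n−1)st row and its 2nd column is distributed as the random tableau S_{n−1,α,β} conditioned on its box (n−1,1) containing a β: for every T ∈ S̄_{n−1} with a β in box (n−1,1), P( (S_{n,α,β})_{n−1,2} = T | S_{n,α,β}(n−1,1) = β ) = P( S_{n−1,α,β} = T | S_{n−1,α,β}(n−1,1) = β ). -/

import Mathlib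

/-!
A β in box `(n - 1, 1)` forces the rest of row `n - 1` and of column `2`: the diagonal box
`(n - 1, 2)` must hold α (a β there would empty the box to its left), so column `2` is empty
above it, and the diagonal box `(n, 1)` must hold β (an α there would empty the box above it).
Hence deleting row `n - 1` and column `2` is a bijection from these tableaux of size `n` onto the
tableaux of size `n - 1` with a β in box `(n - 1, 1)`, dividing every weight by `αβ`. In both
conditional probabilities the partition function cancels, and so does the factor `αβ`.
-/

/-- The two symbols α, β that may fill a box of an α/β-staircase tableau. -/
inductive ABSymbol : Type
  | A : ABSymbol  -- α
  | B : ABSymbol  -- β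
  deriving DecidableEq

instance : Fintype ABSymbol :=
  ⟨{ABSymbol.A, ABSymbol.B}, fun x => by cases x <;> simp⟩

/-- `f` is an α/β-staircase tableau of size `n`.  Boxes are indexed `0`-based, so
the box `(i, j)` (with `1 ≤ i, j` and `i + j ≤ n + 1` in the `1`-based indexing of
the paper) corresponds to `f ⟨i-1⟩ ⟨j-1⟩`; the condition `i + j ≤ n + 1` becomes
`(i-1) + (j-1) < n`, and the main diagonal `i + j = n + 1` becomes
`(i-1) + (j-1) + 1 = n`. -/
def IsABStaircase (n : ℕ) (f : Fin n → Fin n → Option ABSymbol) : Prop :=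
  (∀ i j : Fin n, n ≤ (i : ℕ) + (j : ℕ) → f i j = none) ∧
  (∀ i j i' : Fin n, f i j = some ABSymbol.A → i' < i → f i' j = none) ∧
  (∀ i j j' : Fin n, f i j = some ABSymbol.B → j' < j → f i j' = none) ∧
  (∀ i j : Fin n, (i : ℕ) + (j : ℕ) + 1 = n → f i j ≠ none)

/-- `N_α(f)`, the number of α's in `f`. -/
def NA (n : ℕ) (f : Fin n → Fin n → Option ABSymbol) : ℕ :=
  (Finset.univ.filter (fun p : Fin n × Fin n => f p.1 p.2 = some ABSymbol.A)).card

/-- `N_β(f)`, the number of β's in `f`. -/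
def NB (n : ℕ) (f : Fin n → Fin n → Option ABSymbol) : ℕ :=
  (Finset.univ.filter (fun p : Fin n × Fin n => f p.1 p.2 = some ABSymbol.B)).card

/-- The weight `wt(f) = α^{N_α(f)} β^{N_β(f)}`. -/
noncomputable def wt (α β : ℝ) (n : ℕ) (f : Fin n → Fin n → Option ABSymbol) : ℝ :=
  α ^ NA n f * β ^ NB n f

open scoped Classical in
/-- The partition function `Z_n(α, β) = Σ_{S ∈ S̄_n} wt(S)`. -/
noncomputable def Z (α β : ℝ) (n : ℕ) : ℝ :=
  ∑ f ∈ Finset.univ.filter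
      (fun f : Fin n → Fin n → Option ABSymbol => IsABStaircase n f),
    wt α β n f

open scoped Classical in
/-- The probability that the random tableau `S_{n,α,β}` lies in the event `E`. -/
noncomputable def stProb (α β : ℝ) (n : ℕ)
    (E : (Fin n → Fin n → Option ABSymbol) → Prop) : ℝ :=
  (∑ f ∈ Finset.univ.filter
      (fun f : Fin n → Fin n → Option ABSymbol => IsABStaircase n f ∧ E f),
    wt α β n f) / Z α β n

open scoped Classical in
/-- The expectation of `g` under the law of the random tableau `S_{n,α,β}`. -/
noncomputable def stExp (α β : ℝ) (n : ℕ)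
    (g : (Fin n → Fin n → Option ABSymbol) → ℝ) : ℝ :=
  (∑ f ∈ Finset.univ.filter
      (fun f : Fin n → Fin n → Option ABSymbol => IsABStaircase n f),
    wt α β n f * g f) / Z α β n

/-- `diag2 f j` is the content of the second-main-diagonal box `(n - j, j)`
(in the `1`-based indexing of the paper), defined for `1 ≤ j ≤ n - 1`. -/
def diag2 {n : ℕ} (f : Fin n → Fin n → Option ABSymbol) (j : ℕ) : Option ABSymbol :=
  if h : 1 ≤ j ∧ j + 1 ≤ n then f ⟨n - j - 1, by omega⟩ ⟨j - 1, by omega⟩ else none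

/-- `A_n`, the number of α's on the second main diagonal of `f`. -/
def Acount (n : ℕ) (f : Fin n → Fin n → Option ABSymbol) : ℕ :=
  ((Finset.Icc 1 (n - 1)).filter (fun j => diag2 f j = some ABSymbol.A)).card

/-- `B_n`, the number of β's on the second main diagonal of `f`. -/
def Bcount (n : ℕ) (f : Fin n → Fin n → Option ABSymbol) : ℕ :=
  ((Finset.Icc 1 (n - 1)).filter (fun j => diag2 f j = some ABSymbol.B)).card

/-- `X_n`, the number of nonempty boxes on the second main diagonal of `f`. -/
def Xcount (n : ℕ) (f : Fin n → Fin n → Option ABSymbol) : ℕ :=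
  ((Finset.Icc 1 (n - 1)).filter (fun j => diag2 f j ≠ none)).card

/-- `J_{r,m}`: the set of `r`-tuples `1 ≤ j_1 < … < j_r ≤ m` with
`j_k ≤ j_{k+1} - 2` for all `k`. -/
def Jset (r m : ℕ) : Finset (Fin r → ℕ) :=
  (Fintype.piFinset (fun _ : Fin r => Finset.Icc 1 m)).filter
    (fun j => ∀ k l : Fin r, k < l → j k + 2 ≤ j l)

/-- The tableau of size `n - 1` obtained from `f` by deleting its row of
(`0`-based) index `i0` and its column of (`0`-based) index `j0`. -/
def delRC (n : ℕ) (f : Fin n → Fin n → Option ABSymbol) (i0 j0 : ℕ) :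
    Fin (n - 1) → Fin (n - 1) → Option ABSymbol :=
  fun i j =>
    f ⟨if (i : ℕ) < i0 then (i : ℕ) else (i : ℕ) + 1,
        by have := i.isLt; split <;> omega⟩
      ⟨if (j : ℕ) < j0 then (j : ℕ) else (j : ℕ) + 1,
        by have := j.isLt; split <;> omega⟩

open Finset

abbrev Tableau (n : ℕ) := Fin n → Fin n → Option ABSymbol

open scoped Classical in
noncomputable def stMass (α β : ℝ) (n : ℕ) (E : Tableau n → Prop) : ℝ :=
  ∑ f ∈ univ.filter (fun f : Tableau n => IsABStaircase n f ∧ E f), wt α β n f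

lemma stProb_eq_stMass_div (α β : ℝ) (n : ℕ) (E : Tableau n → Prop) :
    stProb α β n E = stMass α β n E / Z α β n := rfl

section Mass

variable {α β : ℝ} {n : ℕ}

lemma wt_pos (hα : 0 < α) (hβ : 0 < β) (f : Tableau n) : 0 < wt α β n f :=
  mul_pos (pow_pos hα _) (pow_pos hβ _)

lemma stMass_congr {E E' : Tableau n → Prop} (h : ∀ f, IsABStaircase n f → (E f ↔ E' f)) :
    stMass α β n E = stMass α β n E' := by
  unfold stMass
  congr 1
  ext f
  simp only [mem_filter, mem_univ, true_and]
  exact ⟨fun ⟨hf, hE⟩ => ⟨hf, (h f hf).1 hE⟩, fun ⟨hf, hE⟩ => ⟨hf, (h f hf).2 hE⟩⟩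

lemma stMass_pos (hα : 0 < α) (hβ : 0 < β) {E : Tableau n → Prop} {f : Tableau n}
    (hf : IsABStaircase n f) (hE : E f) : 0 < stMass α β n E :=
  sum_pos' (fun g _ => (wt_pos hα hβ g).le) ⟨f, by simp [hf, hE], wt_pos hα hβ f⟩

lemma stMass_le_Z (hα : 0 < α) (hβ : 0 < β) (E : Tableau n → Prop) :
    stMass α β n E ≤ Z α β n :=
  sum_le_sum_of_subset_of_nonneg (fun f => by simp +contextual)
    (fun g _ _ => (wt_pos hα hβ g).le)

end Mass

def diagTableau (n : ℕ) : Tableau n :=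
  fun i j => if (i : ℕ) + j + 1 = n then some (if (j : ℕ) = 0 then .B else .A) else none

lemma isABStaircase_diagTableau (n : ℕ) : IsABStaircase n (diagTableau n) := by
  refine ⟨fun i j h => ?_, fun i j i' h hlt => ?_, fun i j j' h hlt => ?_, fun i j h => ?_⟩ <;>
    simp only [diagTableau, Fin.lt_def] at * <;> split_ifs at * <;> first | rfl | omega | simp at *

namespace IsABStaircase

variable {n : ℕ} {f : Tableau n}

lemma eq_A_of_eq_B_left (hf : IsABStaircase n f) {i j j' : Fin n} (hB : f i j = some .B)
    (hjj' : j < j') (hd : (i : ℕ) + j' + 1 = n) : f i j' = some .A := by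
  match h : f i j', hf.2.2.2 i j' hd with
  | some .A, _ => rfl
  | some .B, _ => simp [hf.2.2.1 i j' j h hjj'] at hB

lemma eq_B_of_eq_B_above (hf : IsABStaircase n f) {i i' j : Fin n} (hB : f i j = some .B)
    (hii' : i < i') (hd : (i' : ℕ) + j + 1 = n) : f i' j = some .B := by
  match h : f i' j, hf.2.2.2 i' j hd with
  | some .B, _ => rfl
  | some .A, _ => simp [hf.2.1 i' j i h hii'] at hB

lemma delRC {i0 j0 : ℕ} (hf : IsABStaircase n f) (hd : i0 + j0 + 1 = n) :
    IsABStaircase (n - 1) (delRC n f i0 j0) := by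
  obtain ⟨hout, hA, hB, hdiag⟩ := hf
  refine ⟨fun i j h => hout _ _ ?_, fun i j i' h hlt => hA _ _ _ h ?_,
    fun i j j' h hlt => hB _ _ _ h ?_, fun i j h => hdiag _ _ ?_⟩ <;>
    simp only [Fin.lt_def] at * <;> split_ifs <;> omega

end IsABStaircase

lemma diag2_one {m : ℕ} (f : Tableau (m + 2)) : diag2 f 1 = f ⟨m, by omega⟩ ⟨0, by omega⟩ := by
  simp [diag2]

lemma delRC_apply {m : ℕ} (f : Tableau (m + 1)) (p q : Fin (m + 1)) (i j : Fin m) :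
    delRC (m + 1) f p q i j = f (p.succAbove i) (q.succAbove j) := by
  simp only [delRC, Fin.succAbove, Fin.lt_def, Fin.val_castSucc]
  congr 1 <;> split_ifs <;> rfl

def boxWt (α β : ℝ) : Option ABSymbol → ℝ
  | none => 1
  | some .A => α
  | some .B => β

lemma wt_eq_prod (α β : ℝ) (n : ℕ) (f : Tableau n) :
    wt α β n f = ∏ i, ∏ j, boxWt α β (f i j) := by
  have hbox : ∀ x : Option ABSymbol, boxWt α β x =
      (if x = some .A then α else 1) * (if x = some .B then β else 1) := by
    rintro (_ | _ | _) <;> simp [boxWt]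
  rw [← Fintype.prod_prod_type']
  simp only [wt, NA, NB, hbox, prod_mul_distrib, prod_ite, prod_const, one_pow, mul_one]

lemma wt_eq_mul_wt_delRC (α β : ℝ) {m : ℕ} (f : Tableau (m + 1)) (p q : Fin (m + 1)) :
    wt α β (m + 1) f = (∏ j, boxWt α β (f p j)) * (∏ i, boxWt α β (f (p.succAbove i) q)) *
      wt α β m (delRC (m + 1) f p q) := by
  rw [wt_eq_prod, wt_eq_prod, Fin.prod_univ_succAbove _ p]
  simp only [fun i => Fin.prod_univ_succAbove (fun j => boxWt α β (f (p.succAbove i) j)) q,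
    prod_mul_distrib, delRC_apply, mul_assoc]

section CornerBeta

variable {k : ℕ}

/-- Inverse of `delRC (k + 3) · (k + 1) 1` on staircase tableaux with a β in box `(k + 1, 0)`
(`j - 1` truncates to `0` on column `0`). -/
def insRC (T : Tableau (k + 2)) : Tableau (k + 3) := fun i j =>
  if (i : ℕ) = k + 1 then
    if (j : ℕ) = 0 then some .B else if (j : ℕ) = 1 then some .A else none
  else if (j : ℕ) = 1 then none
  else T ⟨min i (k + 1), by omega⟩ ⟨j - 1, by omega⟩

lemma delRC_insRC (T : Tableau (k + 2)) : delRC (k + 3) (insRC T) (k + 1) 1 = T := by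
  funext i j
  simp only [delRC, insRC]
  split_ifs <;> first | omega | (congr 1 <;> ext <;> simp only <;> omega)

lemma insRC_corner (T : Tableau (k + 2)) : insRC T ⟨k + 1, by omega⟩ ⟨0, by omega⟩ = some .B := by
  simp [insRC]

lemma insRC_delRC {f : Tableau (k + 3)} (hf : IsABStaircase (k + 3) f)
    (hB : f ⟨k + 1, by omega⟩ ⟨0, by omega⟩ = some .B) : insRC (delRC (k + 3) f (k + 1) 1) = f := by
  have hA : f ⟨k + 1, by omega⟩ ⟨1, by omega⟩ = some .A :=
    hf.eq_A_of_eq_B_left hB (by simp) (by simp)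
  funext i j
  simp only [insRC, delRC]
  split_ifs with hi hj0 hj1 hj1
  · rw [← hB]
    congr 1 <;> ext <;> simp only <;> omega
  · rw [← hA]
    congr 1 <;> ext <;> simp only <;> omega
  · exact (hf.1 i j (by omega)).symm
  · rw [show j = ⟨1, by omega⟩ from Fin.ext hj1]
    rcases Nat.lt_or_gt_of_ne hi with hlt | hgt
    · exact (hf.2.1 _ _ i hA (Fin.mk_lt_mk.2 hlt)).symm
    · exact (hf.1 i _ (by simp only; omega)).symm
  all_goals congr 1 <;> ext <;> simp only <;> (try split_ifs) <;> omega

lemma IsABStaircase.insRC {T : Tableau (k + 2)} (hT : IsABStaircase (k + 2) T)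
    (hc : T ⟨k + 1, by omega⟩ ⟨0, by omega⟩ = some .B) : IsABStaircase (k + 3) (insRC T) := by
  have hcA : ∀ a b : Fin (k + 2), (a : ℕ) = k + 1 → (b : ℕ) = 0 → T a b ≠ some .A := by
    rintro ⟨a, ha⟩ ⟨b, hb⟩ (rfl : a = k + 1) (rfl : b = 0)
    rw [hc]
    simp
  obtain ⟨hout, hA, hB, hdiag⟩ := hT
  refine ⟨fun i j h => ?_, fun i j i' h hlt => ?_, fun i j j' h hlt => ?_, fun i j h => ?_⟩ <;>
    simp only [_root_.insRC, Fin.lt_def] at * <;> split_ifs at * <;>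
    first
    | omega
    | simp at h; done
    | simp; done
    | exact hout _ _ (by simp only; omega)
    | exact hA _ _ _ h (by simp only; omega)
    | exact hB _ _ _ h (by simp only; omega)
    | exact hdiag _ _ (by simp only; omega)
    | exact hcA _ _ (by simp only; omega) (by simp only; omega) h

lemma wt_insRC (α β : ℝ) (T : Tableau (k + 2)) :
    wt α β (k + 3) (insRC T) = α * β * wt α β (k + 2) T := by
  have hrow : ∏ j, boxWt α β (insRC T ⟨k + 1, by omega⟩ j) = β * α := by
    simp [Fin.prod_univ_succ, insRC, boxWt]
  have hcol : ∏ i, boxWt α β (insRC T ((⟨k + 1, by omega⟩ : Fin (k + 3)).succAbove i) 1) = 1 :=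
    prod_eq_one fun i _ => by
      simp [insRC, boxWt, Fin.val_ne_iff.2 (Fin.succAbove_ne _ i)]
  rw [wt_eq_mul_wt_delRC α β (insRC T) ⟨k + 1, by omega⟩ 1, hrow, hcol, Fin.val_one,
    delRC_insRC]
  ring

end CornerBeta

lemma stMass_diag2_eq_B_and_delRC (α β : ℝ) (k : ℕ) (G : Tableau (k + 2) → Prop) :
    stMass α β (k + 3) (fun f => diag2 f 1 = some .B ∧ G (delRC (k + 3) f (k + 1) 1)) =
      α * β * stMass α β (k + 2) (fun g => g ⟨k + 1, by omega⟩ ⟨0, by omega⟩ = some .B ∧ G g) := by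
  unfold stMass
  rw [mul_sum]
  refine sum_nbij' (fun f => delRC (k + 3) f (k + 1) 1) insRC ?_ ?_ ?_ ?_ ?_ <;>
    simp only [mem_filter, mem_univ, true_and, diag2_one, and_imp]
  · intro f hf hB hG
    exact ⟨hf.delRC rfl, (hf.eq_B_of_eq_B_above hB (by simp) (by simp)), hG⟩
  · intro T hT hc hG
    exact ⟨hT.insRC hc, insRC_corner T, (delRC_insRC T).symm ▸ hG⟩
  · exact fun f hf hB _ => insRC_delRC hf hB
  · exact fun T _ _ _ => delRC_insRC T
  · intro f hf hB _
    rw [← wt_insRC, insRC_delRC hf hB]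

/-- Lemma 2 (`BSWCorner`): conditionally on the box `(n-1, 1)` of `S_{n,α,β}`
containing a β, the tableau `(S_{n,α,β})_{n-1,2}` (the `(n-1)`st row and the
`2`nd column removed) is distributed as `S_{n-1,α,β}` conditioned on having a β
in its box `(n-1, 1)`. -/
theorem stmt2 (n : ℕ) (hn : 3 ≤ n) (α β : ℝ) (hα : 0 < α) (hβ : 0 < β) :
    0 < stProb α β n (fun f => diag2 f 1 = some ABSymbol.B) ∧
    ∀ T : Fin (n - 1) → Fin (n - 1) → Option ABSymbol, IsABStaircase (n - 1) T →
      T ⟨n - 2, by omega⟩ ⟨0, by omega⟩ = some ABSymbol.B →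
      stProb α β n (fun f => diag2 f 1 = some ABSymbol.B ∧ delRC n f (n - 2) 1 = T) /
          stProb α β n (fun f => diag2 f 1 = some ABSymbol.B)
        = stProb α β (n - 1) (fun g => g = T) /
            stProb α β (n - 1)
              (fun g => g ⟨n - 2, by omega⟩ ⟨0, by omega⟩ = some ABSymbol.B) := by
  have hmass : ∀ G : Tableau (n - 1) → Prop,
      stMass α β n (fun f => diag2 f 1 = some .B ∧ G (delRC n f (n - 2) 1)) =
        α * β * stMass α β (n - 1) (fun g => g ⟨n - 2, by omega⟩ ⟨0, by omega⟩ = some .B ∧ G g) := by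
    obtain ⟨k, rfl⟩ : ∃ k, n = k + 3 := ⟨n - 3, by omega⟩
    exact stMass_diag2_eq_B_and_delRC α β k
  have hcorner : 0 < stMass α β (n - 1) (fun g => g ⟨n - 2, by omega⟩ ⟨0, by omega⟩ = some .B) :=
    stMass_pos hα hβ (isABStaircase_diagTableau _) (by simp [diagTableau]; omega)
  have hB : stMass α β n (fun f => diag2 f 1 = some .B) =
      α * β * stMass α β (n - 1) (fun g => g ⟨n - 2, by omega⟩ ⟨0, by omega⟩ = some .B) := by
    simpa only [and_true] using hmass fun _ => True
  have hBpos : 0 < stMass α β n (fun f => diag2 f 1 = some .B) := by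
    rw [hB]; positivity
  refine ⟨div_pos hBpos (hBpos.trans_le (stMass_le_Z hα hβ _)), fun T _ hTc => ?_⟩
  simp only [stProb_eq_stMass_div]
  rw [div_div_div_cancel_right₀ (hBpos.trans_le (stMass_le_Z hα hβ _)).ne',
    div_div_div_cancel_right₀ (hcorner.trans_le (stMass_le_Z hα hβ _)).ne',
    hmass (· = T), hB, mul_div_mul_left _ _ (by positivity)]
  congr 1
  exact stMass_congr fun g _ => ⟨And.right, fun h => ⟨h ▸ hTc, h⟩⟩
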